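/- There is no analytic map σ : ℍ → ℍ satisfying σ(z + 1) = σ(z) − 1 for all z ∈ ℍ. -/

import Mathlib

open Complex Filter Set Topology

noncomputable section

/-- The upper half-plane `ℍ`, as a subset of `ℂ`. -/
def UHP : Set ℂ := {z : ℂ | 0 < z.im}

/-- The hyperbolic distance `ρ_ℍ` on the upper half-plane. -/
noncomputable def rho (z w : ℂ) : ℝ :=
  2 * Real.arsinh (‖z - w‖ / (2 * Real.sqrt (z.im * w.im)))

/-- The Stolz angle `{z ∈ ℍ : θ < Arg z < π - θ}` at infinity. -/
def StolzAngle (θ : ℝ) : Set ℂ :=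
  {z : ℂ | θ < Complex.arg z ∧ Complex.arg z < Real.pi - θ}

/-- `f(z) → 0` as `z → ∞` within every Stolz angle. -/
def NTLimZeroAtInf (f : ℂ → ℂ) : Prop :=
  ∀ θ : ℝ, 0 < θ → θ < Real.pi / 2 →
    Filter.Tendsto f
      (Filter.comap (fun z : ℂ => ‖z‖) Filter.atTop ⊓
        Filter.principal (StolzAngle θ))
      (nhds (0 : ℂ))

namespace NSM

lemma two_pi_I_ne : (2 * (Real.pi:ℂ) * I) ≠ 0 := by
  simp [Real.pi_ne_zero, I_ne_zero]

noncomputable def Zb (q : ℂ) : ℂ := Complex.log q / (2 * (Real.pi:ℂ) * I)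

noncomputable def Zb2 (q : ℂ) : ℂ := Complex.log (-q) / (2 * (Real.pi:ℂ) * I) + 1/2

lemma Zb_mul (q : ℂ) : Zb q * (2 * (Real.pi:ℂ) * I) = Complex.log q :=
  div_mul_cancel₀ _ two_pi_I_ne

lemma exp_Zb {q : ℂ} (hq : q ≠ 0) : Complex.exp (2 * (Real.pi:ℂ) * I * Zb q) = q := by
  rw [mul_comm, Zb_mul, Complex.exp_log hq]

lemma Zb_im (q : ℂ) : (Zb q).im = -(Real.log ‖q‖) / (2 * Real.pi) := by
  have h : (Zb q).im = -(Complex.log q).re / (2*Real.pi) := by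
    simp [Zb, Complex.div_im, Complex.normSq_apply]
    field_simp
  rw [h, Complex.log_re]

lemma isOpen_UHP : IsOpen UHP := isOpen_Ioi.preimage Complex.continuous_im

lemma Zb_mem {q : ℂ} (h0 : q ≠ 0) (h1 : ‖q‖ < 1) : Zb q ∈ UHP := by
  have h2 : Real.log ‖q‖ < 0 :=
    Real.log_neg (norm_pos_iff.mpr h0) h1
  have h3 : (0:ℝ) < 2 * Real.pi := by positivity
  simp only [UHP, Set.mem_setOf_eq, Zb_im]
  exact div_pos (by linarith) h3

/-- The two branches differ by 0 or 1. -/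
lemma Zb2_cases {q : ℂ} (h0 : q ≠ 0) : Zb2 q = Zb q ∨ Zb2 q = Zb q + 1 := by
  have half : ((Real.pi:ℂ) * I) / (2 * (Real.pi:ℂ) * I) = 1/2 := by
    rw [div_eq_iff two_pi_I_ne]; ring
  rcases lt_trichotomy q.im 0 with him | him | him
  · right
    have harg : Complex.arg (-q) = Complex.arg q + Real.pi :=
      Complex.arg_neg_eq_arg_add_pi_iff.mpr (Or.inl him)
    have hlog : Complex.log (-q) = Complex.log q + Real.pi * I := by
      apply Complex.ext
      · simp [Complex.log_re]
      · simp [Complex.log_im, harg]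
    rw [Zb2, Zb, hlog, add_div, half]; ring
  · rcases lt_trichotomy q.re 0 with hre | hre | hre
    · left
      have harg : Complex.arg (-q) = Complex.arg q - Real.pi :=
        Complex.arg_neg_eq_arg_sub_pi_iff.mpr (Or.inr ⟨him, hre⟩)
      have hlog : Complex.log (-q) = Complex.log q - Real.pi * I := by
        apply Complex.ext
        · simp [Complex.log_re]
        · simp [Complex.log_im, harg]
      rw [Zb2, Zb, hlog, sub_div, half]; ring
    · exact absurd (Complex.ext (by simp [hre]) (by simp [him]) : q = 0) h0
    · right
      have harg : Complex.arg (-q) = Complex.arg q + Real.pi :=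
        Complex.arg_neg_eq_arg_add_pi_iff.mpr (Or.inr ⟨him, hre⟩)
      have hlog : Complex.log (-q) = Complex.log q + Real.pi * I := by
        apply Complex.ext
        · simp [Complex.log_re]
        · simp [Complex.log_im, harg]
      rw [Zb2, Zb, hlog, add_div, half]; ring
  · left
    have harg : Complex.arg (-q) = Complex.arg q - Real.pi :=
      Complex.arg_neg_eq_arg_sub_pi_iff.mpr (Or.inl him)
    have hlog : Complex.log (-q) = Complex.log q - Real.pi * I := by
      apply Complex.ext
      · simp [Complex.log_re]
      · simp [Complex.log_im, harg]
    rw [Zb2, Zb, hlog, sub_div, half]; ring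

end NSM

open NSM

/-- There is no analytic self-map `σ` of the upper half-plane with `σ(z + 1) = σ(z) - 1`. -/
theorem no_selfmap_conjugating_translation_to_opposite :
    ¬ ∃ σ : ℂ → ℂ, Set.MapsTo σ UHP UHP ∧ DifferentiableOn ℂ σ UHP ∧
      ∀ z ∈ UHP, σ (z + 1) = σ z - 1 := by
  rintro ⟨σ, hmap, hdiff, hrel⟩
  have hσat : ∀ z ∈ UHP, DifferentiableAt ℂ σ z :=
    fun z hz => hdiff.differentiableAt (isOpen_UHP.mem_nhds hz)
  have hshift : ∀ z ∈ UHP, z + 1 ∈ UHP := by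
    intro z hz; simpa [UHP] using hz
  -- the punctured unit disk
  set U : Set ℂ := {q : ℂ | q ≠ 0 ∧ ‖q‖ < 1} with hUdef
  have hUopen : IsOpen U :=
    IsOpen.inter isOpen_ne (isOpen_lt continuous_norm continuous_const)
  have hZU : ∀ q ∈ U, Zb q ∈ UHP := fun q hq => Zb_mem hq.1 hq.2
  -- the descended function ĝ
  set gh : ℂ → ℂ := fun q => σ (Zb q) + Zb q with hghdef
  have halt : ∀ q ∈ U, gh q = σ (Zb2 q) + Zb2 q := by
    intro q hq
    rcases Zb2_cases hq.1 with h | h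
    · rw [h]
    · rw [h, hrel (Zb q) (hZU q hq)]; simp only [hghdef]; ring
  have hZb2mem : ∀ q ∈ U, Zb2 q ∈ UHP := by
    intro q hq
    rcases Zb2_cases hq.1 with h | h
    · rw [h]; exact hZU q hq
    · rw [h]; exact hshift _ (hZU q hq)
  have hghdiff : ∀ q ∈ U, DifferentiableAt ℂ gh q := by
    intro q hq
    by_cases hs : q ∈ Complex.slitPlane
    · have hZd : DifferentiableAt ℂ Zb q := by
        unfold Zb
        exact (Complex.differentiableAt_log hs).div_const _
      exact ((hσat _ (hZU q hq)).comp q hZd).add hZd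
    · -- q is a negative real; use the other branch
      have hre : q.re < 0 := by
        rw [Complex.mem_slitPlane_iff] at hs
        push_neg at hs
        rcases lt_or_eq_of_le hs.1 with h | h
        · exact h
        · exact absurd (Complex.ext h (by simpa using hs.2) : q = 0) hq.1
      have hneg : -q ∈ Complex.slitPlane := by
        rw [Complex.mem_slitPlane_iff]
        left; simpa using hre
      have hZ2d : DifferentiableAt ℂ Zb2 q := by
        unfold Zb2
        exact (((Complex.differentiableAt_log hneg).comp q
          (differentiable_id.neg).differentiableAt).div_const _).add_const _
      have hd2 : DifferentiableAt ℂ (fun q => σ (Zb2 q) + Zb2 q) q :=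
        ((hσat _ (hZb2mem q hq)).comp q hZ2d).add hZ2d
      have hEq : gh =ᶠ[𝓝 q] fun q => σ (Zb2 q) + Zb2 q :=
        eventually_of_mem (hUopen.mem_nhds hq) (fun x hx => halt x hx)
      exact hd2.congr_of_eventuallyEq hEq
  -- the function G
  set G : ℂ → ℂ := fun q => q * Complex.exp (2 * (Real.pi:ℂ) * I * σ (Zb q)) with hGdef
  have hGg : ∀ q ∈ U, G q = Complex.exp (2 * (Real.pi:ℂ) * I * gh q) := by
    intro q hq
    simp only [hGdef, hghdef, mul_add, Complex.exp_add, exp_Zb hq.1]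
    ring
  have hGne : ∀ q ∈ U, G q ≠ 0 := fun q hq => mul_ne_zero hq.1 (Complex.exp_ne_zero _)
  have hGdiffAt : ∀ q ∈ U, DifferentiableAt ℂ G q := by
    intro q hq
    have hd : DifferentiableAt ℂ (fun q => Complex.exp (2 * (Real.pi:ℂ) * I * gh q)) q :=
      Complex.differentiable_exp.differentiableAt.comp q
        ((differentiableAt_const _).mul (hghdiff q hq))
    have hEq : G =ᶠ[𝓝 q] fun q => Complex.exp (2 * (Real.pi:ℂ) * I * gh q) :=
      eventually_of_mem (hUopen.mem_nhds hq) (fun x hx => hGg x hx)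
    exact hd.congr_of_eventuallyEq hEq
  have hGbound : ∀ q ∈ U, ‖G q‖ ≤ ‖q‖ := by
    intro q hq
    have him : 0 < (σ (Zb q)).im := hmap (hZU q hq)
    have hre : (2 * (Real.pi:ℂ) * I * σ (Zb q)).re = -(2 * Real.pi * (σ (Zb q)).im) := by
      simp [Complex.mul_re, Complex.mul_im]
      try ring
    have : ‖Complex.exp (2 * (Real.pi:ℂ) * I * σ (Zb q))‖ ≤ 1 := by
      rw [Complex.norm_exp, hre]
      rw [Real.exp_le_one_iff]
      have := Real.pi_pos
      nlinarith
    have habsG : ‖G q‖ =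
        ‖q‖ * ‖Complex.exp (2 * (Real.pi:ℂ) * I * σ (Zb q))‖ := by
      simp only [hGdef, norm_mul]
    rw [habsG]
    nlinarith [norm_nonneg q,
      norm_nonneg (Complex.exp (2 * (Real.pi:ℂ) * I * σ (Zb q)))]
  have habs1 : ∀ᶠ q in 𝓝 (0:ℂ), ‖q‖ < 1 :=
    (isOpen_lt continuous_norm continuous_const).mem_nhds (by simp)
  have hGcont0 : ContinuousAt G 0 := by
    have hG0 : G 0 = 0 := by simp [hGdef]
    rw [ContinuousAt, hG0]
    apply squeeze_zero_norm' (a := fun q : ℂ => ‖q‖)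
    · filter_upwards [habs1] with q hq
      rcases eq_or_ne q 0 with rfl | hq0
      · simp [hG0]
      · exact hGbound q ⟨hq0, hq⟩
    · simpa using (continuous_norm.tendsto (0:ℂ))
  have hGan : AnalyticAt ℂ G 0 := by
    apply Complex.analyticAt_of_differentiable_on_punctured_nhds_of_continuousAt _ hGcont0
    filter_upwards [eventually_nhdsWithin_of_eventually_nhds habs1, self_mem_nhdsWithin]
      with q hq1 hq2
    exact hGdiffAt q ⟨hq2, hq1⟩
  -- the order of G at 0
  have hord_ne_top : analyticOrderAt G 0 ≠ ⊤ := by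
    intro htop
    have hev := analyticOrderAt_eq_top.mp htop
    have : ∀ᶠ q in 𝓝[≠] (0:ℂ), G q = 0 ∧ ‖q‖ < 1 := by
      filter_upwards [eventually_nhdsWithin_of_eventually_nhds hev,
        eventually_nhdsWithin_of_eventually_nhds habs1] with q h1 h2
      exact ⟨h1, h2⟩
    obtain ⟨q, hq⟩ := ((this.and self_mem_nhdsWithin).exists)
    exact hGne q ⟨hq.2, hq.1.2⟩ hq.1.1
  obtain ⟨m, hm⟩ := WithTop.ne_top_iff_exists.mp hord_ne_top
  obtain ⟨u, hu_an, hu0, hufac⟩ := (hGan.analyticOrderAt_eq_natCast (n := m)).mp hm.symm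
  have hG0 : G 0 = 0 := by simp [hGdef]
  have hm1 : 1 ≤ m := by
    rcases Nat.eq_zero_or_pos m with h | h
    · exfalso
      have := hufac.self_of_nhds
      rw [h, hG0] at this
      simp at this
      exact hu0 this.symm
    · exact h
  -- a logarithm of u near 0
  have hu_cont := hu_an.continuousAt
  have htend : Tendsto (fun q => u q / u 0) (𝓝 (0:ℂ)) (𝓝 1) := by
    have h' : ContinuousAt (fun q => u q / u 0) 0 := hu_cont.div_const (u 0)
    rw [ContinuousAt] at h'
    simpa [div_self hu0] using h'
  have hball : ∀ᶠ q in 𝓝 (0:ℂ), u q / u 0 ∈ Metric.ball (1:ℂ) (1/2) :=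
    htend (Metric.ball_mem_nhds (1:ℂ) (by norm_num))
  have hslit : ∀ z ∈ Metric.ball (1:ℂ) (1/2), z ∈ Complex.slitPlane ∧ z ≠ 0 := by
    intro z hz
    rw [Metric.mem_ball, Complex.dist_eq] at hz
    have h1 : |(z - 1).re| ≤ ‖z - 1‖ := Complex.abs_re_le_norm _
    have h2 : (z - 1).re = z.re - 1 := by simp
    have hre : 0 < z.re := by
      rw [h2] at h1
      have := abs_lt.mp (lt_of_le_of_lt h1 hz)
      linarith [this.1]
    exact ⟨Complex.mem_slitPlane_iff.mpr (Or.inl hre),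
      fun h => by simp [h] at hre⟩
  set w : ℂ → ℂ := fun q => Complex.log (u 0) + Complex.log (u q / u 0) with hwdef
  have hwu : ∀ᶠ q in 𝓝 (0:ℂ), Complex.exp (w q) = u q := by
    filter_upwards [hball] with q hq
    have hq0 : u q / u 0 ≠ 0 := (hslit _ hq).2
    rw [hwdef]
    rw [Complex.exp_add, Complex.exp_log hu0, Complex.exp_log hq0]
    try field_simp
  have hw_cont : ∀ᶠ q in 𝓝 (0:ℂ), ContinuousAt w q := by
    filter_upwards [hball, hu_an.eventually_analyticAt] with q hq1 hq2
    exact continuousAt_const.add ((hq2.continuousAt.div_const _).clog (hslit _ hq1).1)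
  -- gather all eventual facts and pick a radius
  have hev : ∀ᶠ q in 𝓝 (0:ℂ), (G q = (q - 0)^m • u q) ∧ Complex.exp (w q) = u q ∧
      ContinuousAt w q ∧ ‖q‖ < 1 := by
    filter_upwards [hufac, hwu, hw_cont, habs1] with q h1 h2 h3 h4
    exact ⟨h1, h2, h3, h4⟩
  rw [Metric.eventually_nhds_iff] at hev
  obtain ⟨ε, hε, hevP⟩ := hev
  set r : ℝ := min (ε/2) (1/2) with hrdef
  have hr0 : 0 < r := by positivity
  have hrε : r < ε := lt_of_le_of_lt (min_le_left _ _) (by linarith)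
  have hr1 : r < 1 := lt_of_le_of_lt (min_le_right _ _) (by norm_num)
  set c : ℝ → ℂ := fun θ => (r:ℂ) * Complex.exp ((θ:ℂ) * I) with hcdef
  have habs_c : ∀ θ, ‖c θ‖ = r := by
    intro θ
    simp [hcdef, norm_mul, Complex.norm_exp, abs_of_pos hr0]
  have hcU : ∀ θ, c θ ∈ U := by
    intro θ
    constructor
    · intro h
      have := habs_c θ
      rw [h] at this
      simp at this
      linarith
    · rw [habs_c]; exact hr1
  have hcP : ∀ θ, dist (c θ) 0 < ε := by
    intro θ
    rw [Complex.dist_eq, sub_zero, habs_c]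
    exact hrε
  have hc_cont : Continuous c :=
    continuous_const.mul ((Complex.continuous_ofReal.mul continuous_const).cexp)
  have hcc : c (2*Real.pi) = c 0 := by
    simp only [hcdef]
    rw [show (((2*Real.pi:ℝ)):ℂ) * I = 2 * (Real.pi:ℂ) * I by push_cast; ring]
    rw [Complex.exp_two_pi_mul_I]
    simp
  -- the key function on the circle
  set h : ℝ → ℂ := fun θ => 2 * (Real.pi:ℂ) * I * gh (c θ) -
      (w (c θ) + (m:ℂ) * (Real.log r : ℂ) + (m:ℂ) * ((θ:ℂ) * I)) with hhdef
  have hrc : (r:ℂ) = Complex.exp ((Real.log r : ℂ)) := by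
    rw [← Complex.ofReal_exp, Real.exp_log hr0]
  have hexp : ∀ θ, Complex.exp (h θ) = 1 := by
    intro θ
    obtain ⟨h1, h2, _, _⟩ := hevP (hcP θ)
    have hcm : (c θ)^m = Complex.exp ((m:ℂ) * (Real.log r : ℂ)) *
        Complex.exp ((m:ℂ) * ((θ:ℂ) * I)) := by
      simp only [hcdef]
      rw [mul_pow, hrc]
      simp only [← Complex.exp_nat_mul]
    have e1 : Complex.exp (2 * (Real.pi:ℂ) * I * gh (c θ)) =
        Complex.exp ((m:ℂ) * (Real.log r : ℂ)) * Complex.exp ((m:ℂ) * ((θ:ℂ) * I)) *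
          Complex.exp (w (c θ)) := by
      rw [← hGg _ (hcU θ), h1, sub_zero, smul_eq_mul, ← h2, hcm]
    simp only [hhdef]
    rw [Complex.exp_sub, Complex.exp_add, Complex.exp_add, e1]
    field_simp
    try ring
  have him : ∀ θ, ∃ n : ℤ, (h θ).im = n * (2*Real.pi) := by
    intro θ
    obtain ⟨n, hn⟩ := Complex.exp_eq_one_iff.mp (hexp θ)
    refine ⟨n, ?_⟩
    rw [hn]
    simp [Complex.mul_im, Complex.mul_re]
    try ring
  have hhc : Continuous (fun θ => (h θ).im) := by
    apply Complex.continuous_im.comp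
    apply continuous_iff_continuousAt.mpr
    intro θ
    have c1 : ContinuousAt (fun θ => gh (c θ)) θ :=
      ((hghdiff _ (hcU θ)).continuousAt).comp hc_cont.continuousAt
    have c2 : ContinuousAt (fun θ => w (c θ)) θ :=
      ((hevP (hcP θ)).2.2.1).comp hc_cont.continuousAt
    simp only [hhdef]
    exact (continuousAt_const.mul c1).sub
      ((c2.add continuousAt_const).add (continuousAt_const.mul
        ((Complex.continuous_ofReal.mul continuous_const).continuousAt)))
  have hkey : h (2*Real.pi) = h 0 - (m:ℂ) * (2*(Real.pi:ℂ)*I) := by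
    simp only [hhdef, hcc]
    push_cast
    ring
  have hfd : (h (2*Real.pi)).im = (h 0).im - 2*Real.pi*m := by
    rw [hkey]
    simp [Complex.sub_im, Complex.mul_im, Complex.mul_re]
    ring
  obtain ⟨n0, hn0⟩ := him 0
  have hπ := Real.pi_pos
  have hm' : (1:ℝ) ≤ m := by exact_mod_cast hm1
  have hivt : (h 0).im - Real.pi ∈ (fun θ => (h θ).im) '' Set.Icc 0 (2*Real.pi) := by
    apply intermediate_value_Icc' (by linarith) (hhc.continuousOn)
    constructor
    · rw [hfd]; nlinarith
    · simp; linarith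
  obtain ⟨θs, _, hθs⟩ := hivt
  obtain ⟨ns, hns⟩ := him θs
  have hθs' : (h θs).im = (h 0).im - Real.pi := hθs
  have hr2 : (ns:ℝ) * (2*Real.pi) = (n0:ℝ) * (2*Real.pi) - Real.pi := by
    rw [← hns, hθs', hn0]
  have hzz : ((2*ns - 2*n0 + 1 : ℤ) : ℝ) * Real.pi = 0 := by
    push_cast
    linear_combination hr2
  have hfin : (2*ns - 2*n0 + 1 : ℤ) = 0 := by
    rcases mul_eq_zero.mp hzz with h' | h'
    · exact_mod_cast h'
    · exact absurd h' Real.pi_ne_zero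
  omega
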